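/- arXiv:quant-ph/0509196 — 2 statements merged into one kernel-verified Lean document; each statement's English description precedes it below -/
import Mathlib

section
/- Let G be unitary, S Hermitian involutive unitary, X = S G† S G. If u is a unit eigenvector of X with complex eigenvalue α and S·u is orthogonal to u, then for u₊ = (u + S u)/‖u + S u‖ and u₋ = (u − S u)/‖u − S u‖ we have X u₊ = Re(α) u₊ + i Im(α) u₋ and X u₋ = i Im(α) u₊ + Re(α) u₋, together with S u₊ = u₊ and S u₋ = −u₋. -/
/-!
`X = S Gᴴ S G` is unitary and `S X S = Xᴴ`. Eigenvectors of a unitary matrix are eigenvectors of its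
adjoint for the conjugate eigenvalue, so `S u` is an eigenvector of `X` for `conj α`. As `S u ⊥ u`,
the vectors `u ± S u` have the same norm, and writing `α = Re α + i Im α`,
`conj α = Re α - i Im α` in `X (u ± S u) = α u ± conj α (S u)` gives the two formulas.
-/

open Matrix

/-- The Euclidean (ℓ²) norm of a vector in `ℂ^N`. -/
noncomputable def euclNorm {N : ℕ} (v : Fin N → ℂ) : ℝ :=
  ‖(WithLp.equiv 2 (Fin N → ℂ)).symm v‖

/-- The Euclidean inner product `⟨v, w⟩ = Σ conj(v i) * w i` on `ℂ^N`. -/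
noncomputable def einner {N : ℕ} (v w : Fin N → ℂ) : ℂ :=
  inner ℂ ((WithLp.equiv 2 (Fin N → ℂ)).symm v) ((WithLp.equiv 2 (Fin N → ℂ)).symm w)

namespace Matrix

variable {n 𝕜 : Type*} [Fintype n] [DecidableEq n] [RCLike 𝕜]

open scoped ComplexOrder in
theorem conjTranspose_mulVec_eq_star_smul_of_mulVec_eq_smul {U : Matrix n n 𝕜}
    (hU : U ∈ unitaryGroup n 𝕜) {u : n → 𝕜} {α : 𝕜} (hu : U *ᵥ u = α • u) :
    Uᴴ *ᵥ u = star α • u := by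
  have hUU : Uᴴ * U = 1 := mem_unitaryGroup_iff'.mp hU
  have hinv : α • Uᴴ *ᵥ u = u := by
    rw [← mulVec_smul, ← hu, mulVec_mulVec, hUU, one_mulVec]
  by_cases h0 : u = 0
  · simp [h0]
  have hα : star α * α = 1 := by
    have hnorm : star (U *ᵥ u) ⬝ᵥ (U *ᵥ u) = star u ⬝ᵥ u := by
      rw [star_mulVec, dotProduct_mulVec, vecMul_vecMul, hUU, vecMul_one]
    rw [hu, star_smul, smul_dotProduct, dotProduct_smul, smul_smul, smul_eq_mul] at hnorm
    exact mul_right_cancel₀ (dotProduct_star_self_eq_zero.not.mpr h0) (by simpa using hnorm)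
  calc Uᴴ *ᵥ u = (star α * α) • Uᴴ *ᵥ u := by rw [hα, one_smul]
    _ = star α • u := by rw [mul_smul, hinv]

theorem mul_conjTranspose_mul_mul_mem_unitaryGroup {S A : Matrix n n 𝕜}
    (hS : S ∈ unitaryGroup n 𝕜) (hA : A ∈ unitaryGroup n 𝕜) :
    S * Aᴴ * S * A ∈ unitaryGroup n 𝕜 :=
  mul_mem (mul_mem (mul_mem hS (Unitary.star_mem hA)) hS) hA

theorem mulVec_mulVec_eq_star_smul_of_mulVec_eq_smul {S A : Matrix n n 𝕜} (hS : S.IsHermitian)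
    (hX : S * Aᴴ * S * A ∈ unitaryGroup n 𝕜) {u : n → 𝕜} {α : 𝕜}
    (hu : (S * Aᴴ * S * A) *ᵥ u = α • u) :
    (S * Aᴴ * S * A) *ᵥ (S *ᵥ u) = star α • (S *ᵥ u) := by
  have hXS : S * Aᴴ * S * A * S = S * (S * Aᴴ * S * A)ᴴ := by
    simp only [conjTranspose_mul, conjTranspose_conjTranspose, hS.eq, Matrix.mul_assoc]
  rw [mulVec_mulVec, hXS, ← mulVec_mulVec,
    conjTranspose_mulVec_eq_star_smul_of_mulVec_eq_smul hX hu, mulVec_smul]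

end Matrix

theorem euclNorm_sub_eq_euclNorm_add {N : ℕ} {u v : Fin N → ℂ} (h : einner v u = 0) :
    euclNorm (u - v) = euclNorm (u + v) :=
  norm_sub_eq_norm_add h

theorem LinearMap.map_smul_add_sub_of_eigen {V : Type*} [AddCommGroup V] [Module ℂ V]
    (f : V →ₗ[ℂ] V) {u v : V} {α : ℂ} (hu : f u = α • u) (hv : f v = star α • v) (c : ℂ) :
    f (c • (u + v)) = (α.re : ℂ) • c • (u + v) + (Complex.I * α.im) • c • (u - v) ∧
    f (c • (u - v)) = (Complex.I * α.im) • c • (u + v) + (α.re : ℂ) • c • (u - v) := by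
  have hα : α = α.re + α.im * Complex.I := (Complex.re_add_im α).symm
  have hα' : star α = α.re - α.im * Complex.I := by
    apply Complex.ext <;> simp
  rw [map_smul, map_smul, map_add, map_sub, hu, hv, hα']
  generalize α.re = a, α.im = b at hα ⊢
  rw [hα]
  constructor <;> module

theorem stmt_3_general (N : ℕ) (G S : Matrix (Fin N) (Fin N) ℂ)
    (hGu : G * Gᴴ = 1)
    (hSh : Sᴴ = S) (hS2 : S * S = 1)
    (u : Fin N → ℂ) (α : ℂ)
    (heig : (S * Gᴴ * S * G) *ᵥ u = α • u)
    (horth : einner (S *ᵥ u) u = 0)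
    (up um : Fin N → ℂ)
    (hup : up = ((euclNorm (u + S *ᵥ u) : ℂ))⁻¹ • (u + S *ᵥ u))
    (hum : um = ((euclNorm (u - S *ᵥ u) : ℂ))⁻¹ • (u - S *ᵥ u)) :
    (S * Gᴴ * S * G) *ᵥ up = (α.re : ℂ) • up + (Complex.I * (α.im : ℂ)) • um ∧
    (S * Gᴴ * S * G) *ᵥ um = (Complex.I * (α.im : ℂ)) • up + (α.re : ℂ) • um ∧
    S *ᵥ up = up ∧
    S *ᵥ um = -um := by
  have hS : S ∈ unitaryGroup (Fin N) ℂ :=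
    mem_unitaryGroup_iff'.mpr (by rwa [star_eq_conjTranspose, hSh])
  have hX := mul_conjTranspose_mul_mul_mem_unitaryGroup hS (mem_unitaryGroup_iff.mpr hGu)
  have hXSu := mulVec_mulVec_eq_star_smul_of_mulVec_eq_smul hSh hX heig
  have hSSu : S *ᵥ S *ᵥ u = u := by rw [mulVec_mulVec, hS2, one_mulVec]
  rw [euclNorm_sub_eq_euclNorm_add horth] at hum
  subst hup hum
  obtain ⟨hXup, hXum⟩ := (S * Gᴴ * S * G).mulVecLin.map_smul_add_sub_of_eigen heig hXSu
    (euclNorm (u + S *ᵥ u) : ℂ)⁻¹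
  refine ⟨hXup, hXum, ?_, ?_⟩
  · rw [mulVec_smul, mulVec_add, hSSu, add_comm]
  · rw [mulVec_smul, mulVec_sub, hSSu, ← smul_neg, neg_sub]

/-- Let `G` be unitary, `S` Hermitian involutive unitary, `X = S Gᴴ S G`.
If `u` is a unit eigenvector of `X` with eigenvalue `α` and `S u ⊥ u`, then for
`u₊ = (u + S u)/‖u + S u‖` and `u₋ = (u − S u)/‖u − S u‖` one has
`X u₊ = Re(α) u₊ + i Im(α) u₋`, `X u₋ = i Im(α) u₊ + Re(α) u₋`,
`S u₊ = u₊` and `S u₋ = −u₋`. -/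
theorem stmt_3 (N : ℕ) (G S : Matrix (Fin N) (Fin N) ℂ)
    (hGu : G * Gᴴ = 1) (hGu' : Gᴴ * G = 1)
    (hSh : Sᴴ = S) (hS2 : S * S = 1)
    (u : Fin N → ℂ) (α : ℂ)
    (hu : euclNorm u = 1)
    (heig : (S * Gᴴ * S * G) *ᵥ u = α • u)
    (horth : einner (S *ᵥ u) u = 0)
    (up um : Fin N → ℂ)
    (hup : up = ((euclNorm (u + S *ᵥ u) : ℂ))⁻¹ • (u + S *ᵥ u))
    (hum : um = ((euclNorm (u - S *ᵥ u) : ℂ))⁻¹ • (u - S *ᵥ u)) :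
    (S * Gᴴ * S * G) *ᵥ up = (α.re : ℂ) • up + (Complex.I * (α.im : ℂ)) • um ∧
    (S * Gᴴ * S * G) *ᵥ um = (Complex.I * (α.im : ℂ)) • up + (α.re : ℂ) • um ∧
    S *ᵥ up = up ∧
    S *ᵥ um = -um :=
  stmt_3_general N G S hGu hSh hS2 u α heig horth up um hup hum
end

section
/- Let G ∈ SU(2^n), S = σ_{nz}, X = S G† S G, and X' = S G S G†. The dimension of ker(X − I) ∩ ker(S − I) equals the dimension of ker(X' − I) ∩ ker(S − I), and the dimension of ker(X + I) ∩ ker(S − I) equals the dimension of ker(X' + I) ∩ ker(S + I); both correspondences are realized by the isomorphism u ↦ G u. -/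
/-!
If `S² = 1` and `G` is invertible with inverse `H`, put `X = S H S G` and `X' = S G S H`.
For `S u = ε' u` and `X u = ε u`, multiplying `X u = ε u` by `G S` gives
`S (G u) = ε ε' (G u)`, and then `X' (G u) = S G S u = ε' S (G u) = ε ε'² (G u) = ε (G u)`,
since `S² = 1` forces `ε'² u = u`. Exchanging `G` and `H` gives the inverse map, so `u ↦ G u`
is an isomorphism of the joint eigenspaces and preserves their dimension.
-/

open Matrix

/-- `σ_{nz} = I^{⊗(n-1)} ⊗ σ_z` on `n` qubits (qubit `n` = least significant bit). -/
noncomputable def sigmaNZ (n : ℕ) : Matrix (Fin (2 ^ n)) (Fin (2 ^ n)) ℂ :=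
  Matrix.diagonal fun i => if i.val % 2 = 0 then 1 else -1

/-- The eigenspace `ker (A - c • id)` of a matrix `A` for the eigenvalue `c`. -/
noncomputable def eigSp {N : ℕ} (A : Matrix (Fin N) (Fin N) ℂ) (c : ℂ) :
    Submodule ℂ (Fin N → ℂ) :=
  LinearMap.ker (A.mulVecLin - c • LinearMap.id)

lemma mem_eigSp {N : ℕ} {A : Matrix (Fin N) (Fin N) ℂ} {c : ℂ} {u : Fin N → ℂ} :
    u ∈ eigSp A c ↔ A *ᵥ u = c • u := by
  simp [eigSp, LinearMap.mem_ker, sub_eq_zero, Matrix.mulVecLin]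

lemma sigmaNZ_mul_self (n : ℕ) : sigmaNZ n * sigmaNZ n = 1 := by
  rw [sigmaNZ, diagonal_mul_diagonal, ← diagonal_one]
  congr 1
  funext i
  split_ifs <;> norm_num

section JointEigenspace

variable {N : ℕ} {S G H : Matrix (Fin N) (Fin N) ℂ}

lemma mul_self_smul_eq_self_of_mulVec_eq_smul (hS : S * S = 1) {c : ℂ} {u : Fin N → ℂ}
    (hu : S *ᵥ u = c • u) : (c * c) • u = u := by
  rw [← smul_smul, ← hu, ← mulVec_smul, ← hu, mulVec_mulVec, hS, one_mulVec]

lemma mulVec_mem_eigSp_inf (hS : S * S = 1) (hGH : G * H = 1) (hHG : H * G = 1) {ε ε' : ℂ}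
    {u : Fin N → ℂ} (hu : u ∈ eigSp (S * H * S * G) ε ⊓ eigSp S ε') :
    G *ᵥ u ∈ eigSp (S * G * S * H) ε ⊓ eigSp S (ε * ε') := by
  obtain ⟨hX, hSu⟩ := Submodule.mem_inf.mp hu
  rw [mem_eigSp] at hX hSu
  have hSGu : S *ᵥ (G *ᵥ u) = (ε * ε') • (G *ᵥ u) := by
    have hGS : G * S * (S * H * S * G) = S * G := by
      simp only [← Matrix.mul_assoc, Matrix.mul_assoc G S S, hS, Matrix.mul_one, hGH,
        Matrix.one_mul]
    calc S *ᵥ (G *ᵥ u) = (G * S) *ᵥ ((S * H * S * G) *ᵥ u) := by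
          rw [mulVec_mulVec, mulVec_mulVec, hGS]
      _ = (ε * ε') • (G *ᵥ u) := by
          rw [hX, mulVec_smul, ← mulVec_mulVec, hSu, mulVec_smul, smul_smul]
  refine Submodule.mem_inf.mpr ⟨mem_eigSp.mpr ?_, mem_eigSp.mpr hSGu⟩
  calc (S * G * S * H) *ᵥ (G *ᵥ u) = S *ᵥ (G *ᵥ (S *ᵥ u)) := by
        rw [mulVec_mulVec, Matrix.mul_assoc, hHG, Matrix.mul_one, mulVec_mulVec, mulVec_mulVec,
          Matrix.mul_assoc]
    _ = ε • (G *ᵥ ((ε' * ε') • u)) := by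
        rw [hSu, mulVec_smul, mulVec_smul, hSGu, smul_smul, mulVec_smul, smul_smul, mul_left_comm]
    _ = ε • (G *ᵥ u) := by rw [mul_self_smul_eq_self_of_mulVec_eq_smul hS hSu]

lemma map_mulVecLin_eigSp_inf (hS : S * S = 1) (hGH : G * H = 1) (hHG : H * G = 1) {ε : ℂ}
    (hε : ε * ε = 1) (ε' : ℂ) :
    (eigSp (S * H * S * G) ε ⊓ eigSp S ε').map G.mulVecLin =
      eigSp (S * G * S * H) ε ⊓ eigSp S (ε * ε') := by
  refine le_antisymm ?_ fun v hv => ⟨H *ᵥ v, ?_, ?_⟩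
  · rintro _ ⟨u, hu, rfl⟩
    exact mulVec_mem_eigSp_inf hS hGH hHG hu
  · simpa only [SetLike.mem_coe, ← mul_assoc, hε, one_mul] using
      mulVec_mem_eigSp_inf hS hHG hGH hv
  · simp [mulVec_mulVec, hGH]

lemma finrank_eigSp_inf_eq (hS : S * S = 1) (hGH : G * H = 1) (hHG : H * G = 1) {ε : ℂ}
    (hε : ε * ε = 1) (ε' : ℂ) :
    Module.finrank ℂ (eigSp (S * H * S * G) ε ⊓ eigSp S ε' : Submodule ℂ _) =
      Module.finrank ℂ (eigSp (S * G * S * H) ε ⊓ eigSp S (ε * ε') : Submodule ℂ _) := by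
  rw [← map_mulVecLin_eigSp_inf hS hGH hHG hε]
  exact (LinearEquiv.finrank_map_eq (G.toLinearEquiv' ⟨H, hHG, hGH⟩) _).symm

end JointEigenspace

theorem stmt_18_general (n : ℕ) (G : Matrix (Fin (2 ^ n)) (Fin (2 ^ n)) ℂ)
    (hGu : G * Gᴴ = 1) (hGu' : Gᴴ * G = 1) :
    (∀ u, u ∈ eigSp (sigmaNZ n * Gᴴ * sigmaNZ n * G) 1 ⊓ eigSp (sigmaNZ n) 1 →
        G *ᵥ u ∈ eigSp (sigmaNZ n * G * sigmaNZ n * Gᴴ) 1 ⊓ eigSp (sigmaNZ n) 1) ∧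
    (∀ u, u ∈ eigSp (sigmaNZ n * Gᴴ * sigmaNZ n * G) (-1) ⊓ eigSp (sigmaNZ n) 1 →
        G *ᵥ u ∈ eigSp (sigmaNZ n * G * sigmaNZ n * Gᴴ) (-1) ⊓ eigSp (sigmaNZ n) (-1)) ∧
    Module.finrank ℂ
        (eigSp (sigmaNZ n * Gᴴ * sigmaNZ n * G) 1 ⊓ eigSp (sigmaNZ n) 1 : Submodule ℂ _)
      = Module.finrank ℂ
        (eigSp (sigmaNZ n * G * sigmaNZ n * Gᴴ) 1 ⊓ eigSp (sigmaNZ n) 1 : Submodule ℂ _) ∧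
    Module.finrank ℂ
        (eigSp (sigmaNZ n * Gᴴ * sigmaNZ n * G) (-1) ⊓ eigSp (sigmaNZ n) 1 : Submodule ℂ _)
      = Module.finrank ℂ
        (eigSp (sigmaNZ n * G * sigmaNZ n * Gᴴ) (-1) ⊓ eigSp (sigmaNZ n) (-1) : Submodule ℂ _) := by
  have hS := sigmaNZ_mul_self n
  refine ⟨fun u hu => ?_, fun u hu => ?_, ?_, ?_⟩
  · simpa only [mul_one] using mulVec_mem_eigSp_inf hS hGu hGu' (ε := 1) hu
  · simpa only [mul_one] using mulVec_mem_eigSp_inf hS hGu hGu' (ε := -1) hu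
  · rw [finrank_eigSp_inf_eq hS hGu hGu' (by norm_num) 1, mul_one]
  · rw [finrank_eigSp_inf_eq hS hGu hGu' (by norm_num) 1, mul_one]

/-- Let `G ∈ SU(2^n)`, `S = σ_{nz}`, `X = S Gᴴ S G`, `X' = S G S Gᴴ`.
The map `u ↦ G u` carries `ker(X−I) ∩ ker(S−I)` into `ker(X'−I) ∩ ker(S−I)` and
`ker(X+I) ∩ ker(S−I)` into `ker(X'+I) ∩ ker(S+I)`, and the corresponding
dimensions are equal. -/
theorem stmt_18 (n : ℕ) (G : Matrix (Fin (2 ^ n)) (Fin (2 ^ n)) ℂ)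
    (hGu : G * Gᴴ = 1) (hGu' : Gᴴ * G = 1) (hGdet : G.det = 1) :
    (∀ u, u ∈ eigSp (sigmaNZ n * Gᴴ * sigmaNZ n * G) 1 ⊓ eigSp (sigmaNZ n) 1 →
        G *ᵥ u ∈ eigSp (sigmaNZ n * G * sigmaNZ n * Gᴴ) 1 ⊓ eigSp (sigmaNZ n) 1) ∧
    (∀ u, u ∈ eigSp (sigmaNZ n * Gᴴ * sigmaNZ n * G) (-1) ⊓ eigSp (sigmaNZ n) 1 →
        G *ᵥ u ∈ eigSp (sigmaNZ n * G * sigmaNZ n * Gᴴ) (-1) ⊓ eigSp (sigmaNZ n) (-1)) ∧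
    Module.finrank ℂ
        (eigSp (sigmaNZ n * Gᴴ * sigmaNZ n * G) 1 ⊓ eigSp (sigmaNZ n) 1 : Submodule ℂ _)
      = Module.finrank ℂ
        (eigSp (sigmaNZ n * G * sigmaNZ n * Gᴴ) 1 ⊓ eigSp (sigmaNZ n) 1 : Submodule ℂ _) ∧
    Module.finrank ℂ
        (eigSp (sigmaNZ n * Gᴴ * sigmaNZ n * G) (-1) ⊓ eigSp (sigmaNZ n) 1 : Submodule ℂ _)
      = Module.finrank ℂ
        (eigSp (sigmaNZ n * G * sigmaNZ n * Gᴴ) (-1) ⊓ eigSp (sigmaNZ n) (-1) : Submodule ℂ _) :=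
  stmt_18_general n G hGu hGu'
end
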